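/- arXiv:1007.2312 — 5 statements merged into one kernel-verified Lean document; each statement's English description precedes it below -/
import Mathlib

section
/- Let L/K be a finite Galois extension of fields with Galois group G = {γ₁ = id, γ₂, …, γₙ}. A family of elements x₁, …, xₙ ∈ L is a K-basis of L if and only if the determinant of the n×n matrix whose (i,j)-entry is γⱼ⁻¹(xᵢ) is nonzero. -/
/-!
A nonzero kernel vector `c` of `(σⱼ(xᵢ))` gives a relation `∑ⱼ cⱼ σⱼ = 0` on the spanning family
`x`, hence on all of `L`, contradicting Dedekind's independence of characters. Conversely, a
`K`-linear relation among the `xᵢ` is a nonzero left kernel vector. Since `|G| = [L : K]`,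
linear independence of the `xᵢ` already makes them a basis.
-/

open Matrix

theorem Matrix.det_of_algHom_apply_ne_zero {ι K A B : Type*} [Fintype ι] [DecidableEq ι]
    [CommSemiring K] [Semiring A] [Algebra K A] [CommRing B] [IsDomain B] [Algebra K B]
    {σ : ι → A →ₐ[K] B} (hσ : Function.Injective σ) {x : ι → A}
    (hx : Submodule.span K (Set.range x) = ⊤) :
    (of fun i j => σ j (x i)).det ≠ 0 := by
  intro hdet
  obtain ⟨c, hc0, hc⟩ := exists_mulVec_eq_zero_iff.mpr hdet
  have hdedekind : LinearIndependent B fun j => (σ j).toLinearMap :=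
    (linearIndependent_toLinearMap K A B).comp σ hσ
  refine hc0 (funext <| Fintype.linearIndependent_iff.mp hdedekind c ?_)
  refine LinearMap.ext_on_range hx fun i => ?_
  simpa [mulVec, dotProduct, mul_comm] using congrFun hc i

theorem Matrix.linearIndependent_of_det_of_linearMap_apply_ne_zero {ι K A B : Type*} [Fintype ι]
    [DecidableEq ι] [Field K] [AddCommGroup A] [Module K A] [CommRing B] [IsDomain B]
    [Algebra K B] {σ : ι → A →ₗ[K] B} {x : ι → A} (hdet : (of fun i j => σ j (x i)).det ≠ 0) :
    LinearIndependent K x := by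
  refine Fintype.linearIndependent_iff.mpr fun c hc => ?_
  have hv : (fun i => algebraMap K B (c i)) ᵥ* of (fun i j => σ j (x i)) = 0 := by
    funext j
    simpa [vecMul, dotProduct, Algebra.smul_def] using congrArg (σ j) hc
  have hc0 : (fun i => algebraMap K B (c i)) = 0 := by
    by_contra h
    exact hdet (exists_vecMul_eq_zero_iff.mp ⟨_, h, hv⟩)
  exact fun i => (algebraMap K B).injective (by simpa using congrFun hc0 i)

theorem normal_basis_det_criterion_general {K L : Type*} [Field K] [Field L] [Algebra K L]
    [FiniteDimensional K L] [IsGalois K L] {n : ℕ}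
    (γ : Fin n → (L ≃ₐ[K] L)) (hbij : Function.Bijective γ)
    (x : Fin n → L) :
    (LinearIndependent K x ∧ Submodule.span K (Set.range x) = ⊤) ↔
      Matrix.det (Matrix.of fun i j : Fin n => (γ j).symm (x i)) ≠ 0 := by
  have hσ : Function.Injective fun j => ((γ j).symm : L →ₐ[K] L) :=
    AlgEquiv.coe_toAlgHom_injective.comp (AlgEquiv.symm_bijective.injective.comp hbij.injective)
  have hcard : Fintype.card (Fin n) = Module.finrank K L := by
    rw [← IsGalois.card_aut_eq_finrank, Nat.card_eq_fintype_card, Fintype.card_of_bijective hbij]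
  refine ⟨fun h => det_of_algHom_apply_ne_zero hσ h.2, fun hdet => ?_⟩
  have hx : LinearIndependent K x :=
    linearIndependent_of_det_of_linearMap_apply_ne_zero (σ := fun j => (γ j).symm.toLinearMap) hdet
  exact ⟨hx, hx.span_eq_top_of_card_eq_finrank' hcard⟩

/-- Let `L/K` be a finite Galois extension with Galois group
`G = {γ₁ = id, γ₂, …, γₙ}`.  A family `x₁, …, xₙ ∈ L` is a `K`-basis of `L` iff
`det (γⱼ⁻¹ (xᵢ)) ≠ 0`. -/
theorem normal_basis_det_criterion {K L : Type*} [Field K] [Field L] [Algebra K L]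
    [FiniteDimensional K L] [IsGalois K L] {n : ℕ} (hn : 0 < n)
    (γ : Fin n → (L ≃ₐ[K] L)) (hbij : Function.Bijective γ)
    (hid : γ ⟨0, hn⟩ = 1) (x : Fin n → L) :
    (LinearIndependent K x ∧ Submodule.span K (Set.range x) = ⊤) ↔
      Matrix.det (Matrix.of fun i j : Fin n => (γ j).symm (x i)) ≠ 0 :=
  normal_basis_det_criterion_general γ hbij x
end

section
/- Let K ⊆ L ⊆ ℂ with L/K a finite abelian extension with Galois group G. For x ∈ L, the conjugates {γ(x) : γ ∈ G} form a normal basis of L over K (i.e., a K-basis of L) if and only if for every complex character χ of G the sum Σ_{γ ∈ G} χ(γ⁻¹) γ(x) is nonzero. -/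
/-!
Write `f γ = γ x` and consider the complex matrix `(γ δ x)_{γ, δ}`, whose columns are the
translates `γ ↦ f (γ δ)` of `f`. By Dedekind's independence of the embeddings `L → ℂ`, the
conjugates of `x` form a normal basis iff these columns are linearly independent; commutativity
of `G` makes the matrix symmetric, which lets rows and columns be exchanged. Averaging the
columns against a character gives `∑ δ, χ δ⁻¹ • (γ ↦ f (γ δ)) = S χ • χ`, where `S χ` is the
character sum; as the characters form a basis of `G → ℂ`, the translates are independent iff
no `S χ` vanishes.
-/

open Module Function

section Characters

theorem sum_inv_smul_translate_eq {G F : Type*} [Group G] [Fintype G] [CommRing F]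
    (f : G → F) (χ : G →* Fˣ) :
    ∑ δ, (χ δ⁻¹ : F) • (fun γ => f (γ * δ)) = (∑ γ, (χ γ⁻¹ : F) * f γ) • fun γ => (χ γ : F) := by
  funext γ
  simp only [Finset.sum_apply, Pi.smul_apply, smul_eq_mul, Finset.sum_mul]
  refine Fintype.sum_equiv (Equiv.mulLeft γ) _ _ fun δ => ?_
  have hγ : (χ γ⁻¹ : F) * χ γ = 1 := by
    rw [← Units.val_mul, ← map_mul, inv_mul_cancel, map_one, Units.val_one]
  simp only [Equiv.coe_mulLeft, mul_inv_rev, map_mul, Units.val_mul]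
  linear_combination -(χ δ⁻¹ * f (γ * δ)) * hγ

variable {G F : Type*} [CommGroup G] [Fintype G] [Field F]
  [HasEnoughRootsOfUnity F (Monoid.exponent G)]

theorem span_range_monoidHom_units_eq_top :
    Submodule.span F (Set.range fun (χ : G →* Fˣ) (g : G) => (χ g : F)) = ⊤ := by
  have hli : LinearIndependent F fun (χ : G →* Fˣ) (g : G) => (χ g : F) :=
    (linearIndependent_monoidHom G F).comp (Units.coeHom F).comp
      fun χ χ' h => MonoidHom.ext fun g => Units.ext (DFunLike.congr_fun h g)
  have := hli.finite
  have := Fintype.ofFinite (G →* Fˣ)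
  refine hli.span_eq_top_of_card_eq_finrank' ?_
  rw [finrank_fintype_fun_eq_card, ← Nat.card_eq_fintype_card,
    CommGroup.card_monoidHom_of_hasEnoughRootsOfUnity, Nat.card_eq_fintype_card]

theorem linearIndependent_translates_iff (f : G → F) :
    LinearIndependent F (fun δ γ => f (γ * δ)) ↔ ∀ χ : G →* Fˣ, ∑ γ, (χ γ⁻¹ : F) * f γ ≠ 0 := by
  constructor
  · intro hli χ hχ
    have hrel := sum_inv_smul_translate_eq f χ
    rw [hχ, zero_smul] at hrel
    simpa using Fintype.linearIndependent_iff.mp hli _ hrel 1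
  · intro hχ
    refine linearIndependent_of_top_le_span_of_card_eq_finrank ?_
      (finrank_fintype_fun_eq_card F).symm
    rw [← span_range_monoidHom_units_eq_top, Submodule.span_le]
    rintro _ ⟨χ, rfl⟩
    have hχ_comb := congrArg ((∑ γ, (χ γ⁻¹ : F) * f γ)⁻¹ • ·) (sum_inv_smul_translate_eq f χ)
    rw [inv_smul_smul₀ (hχ χ)] at hχ_comb
    change (fun g => (χ g : F)) ∈ Submodule.span F _
    rw [← hχ_comb]
    exact Submodule.smul_mem _ _ (Submodule.sum_mem _ fun δ _ =>
      Submodule.smul_mem _ _ (Submodule.subset_span ⟨δ, rfl⟩))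

end Characters

section Embeddings

variable {K L F ι κ : Type*} [Field K] [Field L] [Algebra K L] [Field F] [Algebra K F]

theorem linearIndependent_algHom_apply_of_span_eq_top {σ : ι → L →ₐ[K] F} (hσ : Injective σ)
    {v : κ → L} (hv : Submodule.span K (Set.range v) = ⊤) :
    LinearIndependent F fun i k => σ i (v k) := by
  let restrict : (L →ₗ[K] F) →ₗ[F] (κ → F) :=
    { toFun := fun φ k => φ (v k), map_add' := fun _ _ => rfl, map_smul' := fun _ _ => rfl }
  have hrestrict : LinearMap.ker restrict = ⊥ := LinearMap.ker_eq_bot'.mpr fun φ hφ =>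
    LinearMap.ext_on_range hv fun k => congrFun hφ k
  exact ((linearIndependent_toLinearMap K L F).comp σ hσ).map' restrict hrestrict

theorem LinearIndependent.of_algHom_apply (σ : ι → L →ₐ[K] F) {v : κ → L}
    (h : LinearIndependent F fun k i => σ i (v k)) : LinearIndependent K v :=
  (h.restrict_scalars' K).of_comp (LinearMap.pi fun i => (σ i).toLinearMap)

end Embeddings

/-- Let `K ⊆ L ⊆ ℂ` with `L/K` a finite abelian extension with Galois
group `G`.  For `x ∈ L`, the conjugates `{γ(x) : γ ∈ G}` form a normal basis of `L` over
`K` iff for every complex character `χ` of `G` the sum `∑_{γ ∈ G} χ(γ⁻¹) γ(x)` is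
nonzero. -/
theorem normal_basis_iff_character_sums_ne_zero (K : Subfield ℂ) (L : IntermediateField K ℂ)
    [FiniteDimensional K L] [IsGalois K L]
    (hab : ∀ σ τ : L ≃ₐ[K] L, σ * τ = τ * σ) (x : L) :
    (LinearIndependent K (fun γ : L ≃ₐ[K] L => γ x) ∧
        Submodule.span K (Set.range fun γ : L ≃ₐ[K] L => γ x) = ⊤) ↔
      ∀ χ : (L ≃ₐ[K] L) →* ℂˣ,
        (∑ γ : L ≃ₐ[K] L, ((χ γ⁻¹ : ℂˣ) : ℂ) * ((γ x : L) : ℂ)) ≠ 0 := by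
  let _ : CommGroup (L ≃ₐ[K] L) := { mul_comm := hab }
  have : NeZero (Monoid.exponent (L ≃ₐ[K] L)) := ⟨Monoid.exponent_ne_zero_of_finite⟩
  let σ : (L ≃ₐ[K] L) → L →ₐ[K] ℂ := fun γ => L.val.comp γ.toAlgHom
  have hσ : Injective σ := fun γ γ' h => AlgEquiv.ext fun y => Subtype.ext (DFunLike.congr_fun h y)
  refine Iff.trans ?_ (linearIndependent_translates_iff fun γ : L ≃ₐ[K] L => ((γ x : L) : ℂ))
  constructor
  · rintro ⟨-, hspan⟩
    convert linearIndependent_algHom_apply_of_span_eq_top hσ hspan using 3 with δ γ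
    rw [hab]
    rfl
  · intro h
    have hli : LinearIndependent K fun γ : L ≃ₐ[K] L => γ x := h.of_algHom_apply σ
    refine ⟨hli, hli.span_eq_top_of_card_eq_finrank' ?_⟩
    rw [← Nat.card_eq_fintype_card, IsGalois.card_aut_eq_finrank]
end

section
/- Let K ⊆ L ⊆ ℂ with L/K a finite abelian extension with Galois group G. Suppose x ∈ L satisfies |γ(x)/x| < 1 for every γ ∈ G with γ ≠ id (in particular x ≠ 0). Then there exists a positive integer m such that the conjugates {γ(xᵐ) : γ ∈ G} form a normal basis of L over K. -/
/-! Write `r γ = γ x / x`. The matrix `(σ (τ (x ^ m)))_{σ,τ}` is `x ^ m` times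
`(r (σ * τ) ^ m)_{σ,τ}`. Since `r 1 = 1` and `‖r γ‖ < 1` otherwise, the latter tends to the
permutation matrix of `γ ↦ γ⁻¹`, so its determinant is nonzero for large `m`. A nonzero
determinant `det (σ (v τ))` forces the `v τ` to be `K`-linearly independent, and there are
`[L : K]` of them. -/

open Filter Topology

theorem tendsto_pow_pi_single_one {G 𝕜 : Type*} [One G] [DecidableEq G] [SeminormedRing 𝕜]
    {r : G → 𝕜} (h1 : r 1 = 1) (hlt : ∀ g, g ≠ 1 → ‖r g‖ < 1) :
    Tendsto (fun m : ℕ => r ^ m) atTop (𝓝 (Pi.single 1 1)) := by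
  refine tendsto_pi_nhds.2 fun g => ?_
  by_cases hg : g = 1
  · subst hg
    simpa [h1] using tendsto_const_nhds
  · simpa [hg] using tendsto_pow_atTop_nhds_zero_of_norm_lt_one (hlt g hg)

namespace Matrix

variable {G α : Type*}

def ofMul [Mul G] (f : G → α) : Matrix G G α :=
  of fun σ τ => f (σ * τ)

@[simp]
theorem ofMul_apply [Mul G] (f : G → α) (σ τ : G) : ofMul f σ τ = f (σ * τ) :=
  rfl

theorem continuous_ofMul [Mul G] [TopologicalSpace α] :
    Continuous (ofMul : (G → α) → Matrix G G α) :=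
  continuous_pi fun _ => continuous_pi fun _ => continuous_apply _

theorem ofMul_pi_single_one [Group G] [DecidableEq G] [Zero α] [One α] :
    ofMul (Pi.single 1 1 : G → α) = (Equiv.inv G).permMatrix α := by
  ext σ τ
  simp [Pi.single_apply, mul_eq_one_iff_eq_inv, inv_eq_iff_eq_inv]

theorem det_ofMul_pi_single_one_ne_zero [Group G] [Fintype G] [DecidableEq G] [CommRing α]
    [Nontrivial α] : (ofMul (Pi.single 1 1 : G → α)).det ≠ 0 := by
  rw [ofMul_pi_single_one, det_permutation]
  rcases Int.units_eq_one_or (Equiv.Perm.sign (Equiv.inv G)) with h | h <;> simp [h]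

theorem eventually_det_ofMul_pow_ne_zero {𝕜 : Type*} [Group G] [Fintype G]
    [DecidableEq G] [NormedCommRing 𝕜] [Nontrivial 𝕜] {r : G → 𝕜} (h1 : r 1 = 1)
    (hlt : ∀ g, g ≠ 1 → ‖r g‖ < 1) :
    ∀ᶠ m : ℕ in atTop, (ofMul (r ^ m)).det ≠ 0 :=
  (((continuous_id.matrix_det.comp continuous_ofMul).tendsto _).comp
    (tendsto_pow_pi_single_one h1 hlt)).eventually_ne det_ofMul_pi_single_one_ne_zero

end Matrix

theorem linearIndependent_of_det_ne_zero {K V E ι : Type*} [Field K] [AddCommGroup V]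
    [Module K V] [Field E] [Algebra K E] [Fintype ι] [DecidableEq ι]
    (f : ι → V →ₗ[K] E) (v : ι → V) (hdet : (Matrix.of fun i j => f i (v j)).det ≠ 0) :
    LinearIndependent K v :=
  ((Matrix.linearIndependent_cols_of_det_ne_zero hdet).restrict_scalars' K).of_comp
    (LinearMap.pi f)

section Conjugates

variable {K L E : Type*} [Field K] [Field L] [Algebra K L]

theorem conj_pow_matrix_eq_smul_ofMul [Field E] [Algebra K E] (φ : L →ₐ[K] E) {x : L}
    (hx : x ≠ 0) (m : ℕ) :
    (Matrix.of fun σ τ : L ≃ₐ[K] L => φ (σ (τ (x ^ m)))) =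
      φ x ^ m • Matrix.ofMul ((fun γ : L ≃ₐ[K] L => φ (γ x) / φ x) ^ m) := by
  have hφx : φ x ≠ 0 := (map_ne_zero φ).2 hx
  ext σ τ
  simp [div_pow, mul_div_cancel₀ _ (pow_ne_zero m hφx)]

theorem eventually_linearIndependent_conj_pow [FiniteDimensional K L] [NormedField E]
    [Algebra K E] (φ : L →ₐ[K] E) {x : L} (hx : x ≠ 0)
    (hsmall : ∀ γ : L ≃ₐ[K] L, γ ≠ 1 → ‖φ (γ x) / φ x‖ < 1) :
    ∀ᶠ m : ℕ in atTop, LinearIndependent K fun γ : L ≃ₐ[K] L => γ (x ^ m) := by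
  classical
  have hφx : φ x ≠ 0 := (map_ne_zero φ).2 hx
  have h1 : φ ((1 : L ≃ₐ[K] L) x) / φ x = 1 := div_self hφx
  filter_upwards [Matrix.eventually_det_ofMul_pow_ne_zero h1 hsmall] with m hdet
  refine linearIndependent_of_det_ne_zero (fun σ => (φ.comp σ.toAlgHom).toLinearMap) _ ?_
  change (Matrix.of fun σ τ : L ≃ₐ[K] L => φ (σ (τ (x ^ m)))).det ≠ 0
  rw [conj_pow_matrix_eq_smul_ofMul φ hx, Matrix.det_smul]
  exact mul_ne_zero (pow_ne_zero _ (pow_ne_zero _ hφx)) hdet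

end Conjugates

theorem normal_basis_of_small_conjugates_general (K : Subfield ℂ) (L : IntermediateField K ℂ)
    [FiniteDimensional K L] [IsGalois K L]
    (x : L) (hx : x ≠ 0)
    (hsmall : ∀ γ : L ≃ₐ[K] L, γ ≠ 1 → ‖((γ x : L) : ℂ) / ((x : L) : ℂ)‖ < 1) :
    ∃ m : ℕ, 0 < m ∧
      LinearIndependent K (fun γ : L ≃ₐ[K] L => γ (x ^ m)) ∧
      Submodule.span K (Set.range fun γ : L ≃ₐ[K] L => γ (x ^ m)) = ⊤ := by
  obtain ⟨m, hm, hli⟩ :=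
    ((eventually_gt_atTop 0).and (eventually_linearIndependent_conj_pow L.val hx hsmall)).exists
  refine ⟨m, hm, hli, hli.span_eq_top_of_card_eq_finrank' ?_⟩
  rw [← Nat.card_eq_fintype_card, IsGalois.card_aut_eq_finrank]

/-- Let `K ⊆ L ⊆ ℂ` with `L/K` a finite abelian extension with Galois
group `G`.  If `x ∈ L` satisfies `|γ(x)/x| < 1` for every `γ ≠ id` (in particular
`x ≠ 0`), then for some positive integer `m` the conjugates of `x ^ m` form a normal
basis of `L` over `K`. -/
theorem normal_basis_of_small_conjugates (K : Subfield ℂ) (L : IntermediateField K ℂ)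
    [FiniteDimensional K L] [IsGalois K L]
    (hab : ∀ σ τ : L ≃ₐ[K] L, σ * τ = τ * σ)
    (x : L) (hx : x ≠ 0)
    (hsmall : ∀ γ : L ≃ₐ[K] L, γ ≠ 1 → ‖((γ x : L) : ℂ) / ((x : L) : ℂ)‖ < 1) :
    ∃ m : ℕ, 0 < m ∧
      LinearIndependent K (fun γ : L ≃ₐ[K] L => γ (x ^ m)) ∧
      Submodule.span K (Set.range fun γ : L ≃ₐ[K] L => γ (x ^ m)) = ⊤ :=
  normal_basis_of_small_conjugates_general K L x hx hsmall
end

section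
/- Let K ⊆ L ⊆ ℂ with L/K a finite abelian extension with Galois group G of order n. Suppose x ∈ L is nonzero and satisfies |γ(x)/x| ≤ 1/n for every γ ∈ G with γ ≠ id. Then for every complex character χ of G one has |Σ_{γ ∈ G} χ(γ⁻¹) γ(x)| ≥ |x|/n > 0; consequently the conjugates {γ(x) : γ ∈ G} form a normal basis of L over K. -/
/-!
If one of `n` vectors has norm `a` and the other `n - 1` have norm at most `a / n`, their sum has
norm at least `a / n`. In the twisted sum `∑ χ(γ⁻¹) γ(x)` the term at `γ = 1` dominates, since a
character of a finite group takes values of modulus one. Given a relation `∑ c_γ γ(x) = 0` over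
`K`, apply `γ₀⁻¹` where `|c_γ₀|` is maximal: now the term `c_γ₀ x` dominates, so `c_γ₀ = 0` and
every coefficient vanishes. The `n = [L : K]` conjugates are thus independent, hence a basis.
-/

open Finset

theorem norm_div_card_le_norm_sum_of_norm_le {ι E : Type*} [Fintype ι]
    [SeminormedAddCommGroup E] (f : ι → E) (i₀ : ι)
    (hf : ∀ i ≠ i₀, ‖f i‖ ≤ ‖f i₀‖ / Fintype.card ι) :
    ‖f i₀‖ / Fintype.card ι ≤ ‖∑ i, f i‖ := by
  classical
  have hN : (0 : ℝ) < Fintype.card ι := by exact_mod_cast Fintype.card_pos_iff.2 ⟨i₀⟩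
  set r := ‖f i₀‖ / Fintype.card ι
  have hrest : ‖∑ i ∈ univ.erase i₀, f i‖ ≤ (Fintype.card ι - 1) * r :=
    calc ‖∑ i ∈ univ.erase i₀, f i‖ ≤ ∑ _i ∈ univ.erase i₀, r :=
          norm_sum_le_of_le _ fun i hi => hf i (ne_of_mem_erase hi)
      _ = (Fintype.card ι - 1) * r := by
          rw [sum_const, card_erase_of_mem (mem_univ _), card_univ, nsmul_eq_mul,
            Nat.cast_pred (by exact_mod_cast hN)]
  have hsplit : ‖f i₀‖ - ‖∑ i ∈ univ.erase i₀, f i‖ ≤ ‖∑ i, f i‖ := by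
    rw [← add_sum_erase univ f (mem_univ i₀)]
    simpa only [sub_neg_eq_add, norm_neg] using norm_sub_norm_le (f i₀) (-∑ i ∈ univ.erase i₀, f i)
  have hid : ‖f i₀‖ - (Fintype.card ι - 1) * r = r := by
    simp only [r]
    field_simp
    ring
  linarith

theorem norm_div_card_le_norm_sum_char_smul {G E : Type*} [Group G] [Fintype G]
    [SeminormedAddCommGroup E] [NormedSpace ℂ E] (χ : G →* ℂˣ) (v : G → E)
    (hv : ∀ g ≠ 1, ‖v g‖ ≤ ‖v 1‖ / Fintype.card G) :
    ‖v 1‖ / Fintype.card G ≤ ‖∑ g, (χ g⁻¹ : ℂ) • v g‖ := by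
  have hχ : ∀ g, ‖(χ g : ℂ)‖ = 1 := fun g =>
    ((Units.coeHom ℂ).comp χ |>.isOfFinOrder (isOfFinOrder_of_finite g)).norm_eq_one
  simpa using norm_div_card_le_norm_sum_of_norm_le (fun g => (χ g⁻¹ : ℂ) • v g) 1
    fun g hg => by simpa [norm_smul, hχ] using hv g hg

theorem linearIndependent_algEquiv_apply_of_norm_le {K L : Type*} [Field K] [NormedField L]
    [Algebra K L] [Fintype (L ≃ₐ[K] L)] {x : L} (hx : x ≠ 0)
    (hconj : ∀ γ : L ≃ₐ[K] L, γ ≠ 1 → ‖γ x‖ ≤ ‖x‖ / Fintype.card (L ≃ₐ[K] L)) :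
    LinearIndependent K fun γ : L ≃ₐ[K] L => γ x := by
  rw [Fintype.linearIndependent_iff]
  intro c hc
  set a : (L ≃ₐ[K] L) → L := fun γ => algebraMap K L (c γ)
  obtain ⟨γ₀, -, hmax⟩ := exists_max_image univ (fun γ => ‖a γ‖) univ_nonempty
  have hrel : ∑ γ, a γ * (γ₀⁻¹ * γ) x = 0 := by
    simpa [map_sum, Algebra.smul_def, a] using congrArg (γ₀⁻¹ : L ≃ₐ[K] L) hc
  have hdom : ‖a γ₀ * x‖ / Fintype.card (L ≃ₐ[K] L) ≤ 0 := by
    have := norm_div_card_le_norm_sum_of_norm_le (fun γ => a γ * (γ₀⁻¹ * γ) x) γ₀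
      fun γ hγ => by
        simpa [norm_mul, mul_div_assoc] using mul_le_mul (hmax γ (mem_univ γ))
          (hconj _ (inv_mul_eq_one.not.2 (Ne.symm hγ))) (norm_nonneg _) (norm_nonneg _)
    rwa [hrel, norm_zero, inv_mul_cancel, AlgEquiv.one_apply] at this
  have hcard : (0 : ℝ) < Fintype.card (L ≃ₐ[K] L) := by exact_mod_cast Fintype.card_pos
  have ha₀ : a γ₀ = 0 := by
    rw [div_le_iff₀ hcard, zero_mul, norm_le_zero_iff] at hdom
    exact (mul_eq_zero.1 hdom).resolve_right hx
  intro γ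
  have := hmax γ (mem_univ γ)
  rw [ha₀, norm_zero, norm_le_zero_iff] at this
  exact (map_eq_zero_iff _ (algebraMap K L).injective).1 this

theorem normal_basis_of_conjugates_le_inv_card_general (K : Subfield ℂ) (L : IntermediateField K ℂ)
    [FiniteDimensional K L] [IsGalois K L]
    (n : ℕ) (hn : Fintype.card (L ≃ₐ[K] L) = n)
    (x : L) (hx : x ≠ 0)
    (hsmall : ∀ γ : L ≃ₐ[K] L, γ ≠ 1 →
      ‖((γ x : L) : ℂ) / ((x : L) : ℂ)‖ ≤ 1 / n) :
    (∀ χ : (L ≃ₐ[K] L) →* ℂˣ,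
        ‖((x : L) : ℂ)‖ / n ≤
          ‖∑ γ : L ≃ₐ[K] L, ((χ γ⁻¹ : ℂˣ) : ℂ) * ((γ x : L) : ℂ)‖ ∧
        0 < ‖((x : L) : ℂ)‖ / n) ∧
      LinearIndependent K (fun γ : L ≃ₐ[K] L => γ x) ∧
      Submodule.span K (Set.range fun γ : L ≃ₐ[K] L => γ x) = ⊤ := by
  subst hn
  have hxpos : 0 < ‖(x : ℂ)‖ := norm_pos_iff.2 (by exact_mod_cast hx)
  have hconj : ∀ γ : L ≃ₐ[K] L, γ ≠ 1 → ‖γ x‖ ≤ ‖x‖ / Fintype.card (L ≃ₐ[K] L) := by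
    intro γ hγ
    have h := hsmall γ hγ
    rwa [norm_div, div_le_iff₀ hxpos, one_div_mul_eq_div] at h
  have hli := linearIndependent_algEquiv_apply_of_norm_le hx hconj
  refine ⟨fun χ => ⟨?_, div_pos hxpos (by exact_mod_cast Fintype.card_pos)⟩, hli,
    hli.span_eq_top_of_card_eq_finrank ?_⟩
  · simpa using
      norm_div_card_le_norm_sum_char_smul χ (fun γ => ((γ x : L) : ℂ)) (by simpa using hconj)
  · rw [← Nat.card_eq_fintype_card]
    exact IsGalois.card_aut_eq_finrank K L

/-- Let `K ⊆ L ⊆ ℂ` with `L/K` a finite abelian extension with Galois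
group `G` of order `n`.  If `x ∈ L` is nonzero and `|γ(x)/x| ≤ 1/n` for every `γ ≠ id`,
then for every complex character `χ` of `G` one has
`|∑_{γ ∈ G} χ(γ⁻¹) γ(x)| ≥ |x|/n > 0`; consequently the conjugates of `x` form a normal
basis of `L` over `K`. -/
theorem normal_basis_of_conjugates_le_inv_card (K : Subfield ℂ) (L : IntermediateField K ℂ)
    [FiniteDimensional K L] [IsGalois K L]
    (hab : ∀ σ τ : L ≃ₐ[K] L, σ * τ = τ * σ)
    (n : ℕ) (hn : Fintype.card (L ≃ₐ[K] L) = n)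
    (x : L) (hx : x ≠ 0)
    (hsmall : ∀ γ : L ≃ₐ[K] L, γ ≠ 1 →
      ‖((γ x : L) : ℂ) / ((x : L) : ℂ)‖ ≤ 1 / n) :
    (∀ χ : (L ≃ₐ[K] L) →* ℂˣ,
        ‖((x : L) : ℂ)‖ / n ≤
          ‖∑ γ : L ≃ₐ[K] L, ((χ γ⁻¹ : ℂˣ) : ℂ) * ((γ x : L) : ℂ)‖ ∧
        0 < ‖((x : L) : ℂ)‖ / n) ∧
      LinearIndependent K (fun γ : L ≃ₐ[K] L => γ x) ∧
      Submodule.span K (Set.range fun γ : L ≃ₐ[K] L => γ x) = ⊤ :=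
  normal_basis_of_conjugates_le_inv_card_general K L n hn x hx hsmall
end

section
/- Let d_K ≤ −7 be the discriminant of an imaginary quadratic field, let θ = √d_K/2 if d_K ≡ 0 (mod 4) and θ = (−1+√d_K)/2 if d_K ≡ 1 (mod 4), and let Q = aX² + bXY + cY² be a reduced quadratic form of discriminant d_K with a = 1, with θ_Q = (−b+√d_K)/2. Then for every integer N ≥ 2 and every integer t with t ≢ 0, 1, −1 (mod N), one has |g_{(0, t/N)}(θ_Q)⁻¹ / g_{(0, 1/N)}(θ)⁻¹| < 1, i.e. |g_{(0,1/N)}(θ)| < |g_{(0,t/N)}(θ_Q)|. -/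
/-- The `n`-th factor (for `n = 1, 2, …`, indexed here by `ℕ` via `n ↦ n + 1`) of the
infinite product defining the Siegel function:
`(1 − q_τ^{n+1} q_z)(1 − q_τ^{n+1} q_z⁻¹)` with `q_τ = e^{2πiτ}`, `q_z = e^{2πiz}`,
`z = r₁ τ + r₂`. -/
noncomputable def siegelTerm (r₁ r₂ : ℚ) (τ : ℂ) (n : ℕ) : ℂ :=
  (1 - Complex.exp (2 * Real.pi * Complex.I * τ) ^ (n + 1) *
      Complex.exp (2 * Real.pi * Complex.I * ((r₁ : ℂ) * τ + (r₂ : ℂ)))) *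
  (1 - Complex.exp (2 * Real.pi * Complex.I * τ) ^ (n + 1) *
      (Complex.exp (2 * Real.pi * Complex.I * ((r₁ : ℂ) * τ + (r₂ : ℂ))))⁻¹)

/-- The Siegel function
`g_{(r₁,r₂)}(τ) = −q_τ^{(1/2)B₂(r₁)} e^{πi r₂(r₁−1)} (1−q_z) ∏_{n≥1} (1−q_τⁿq_z)(1−q_τⁿq_z⁻¹)`,
where `B₂(X) = X² − X + 1/6`, `q_τ^{(1/2)B₂(r₁)} = e^{πi B₂(r₁) τ}`, and `z = r₁τ + r₂`. -/
noncomputable def siegel (r₁ r₂ : ℚ) (τ : ℂ) : ℂ :=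
  -Complex.exp (Real.pi * Complex.I * ((r₁ : ℂ) ^ 2 - (r₁ : ℂ) + 1 / 6) * τ) *
    Complex.exp (Real.pi * Complex.I * (r₂ : ℂ) * ((r₁ : ℂ) - 1)) *
    (1 - Complex.exp (2 * Real.pi * Complex.I * ((r₁ : ℂ) * τ + (r₂ : ℂ)))) *
    ∏' n : ℕ, siegelTerm r₁ r₂ τ n

/-- `d` is the discriminant of an imaginary quadratic field iff `d < 0` and `d` is a
fundamental discriminant: either `d ≡ 1 (mod 4)` and `d` is squarefree, or `d = 4m` with
`m` squarefree and `m ≡ 2, 3 (mod 4)`. -/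
def IsImagQuadDisc (d : ℤ) : Prop :=
  d < 0 ∧
    ((d % 4 = 1 ∧ Squarefree d) ∨
      (d % 4 = 0 ∧ Squarefree (d / 4) ∧ (d / 4 % 4 = 2 ∨ d / 4 % 4 = 3)))

/-- The standard generator `θ` of the ring of integers of the imaginary quadratic field
of discriminant `d`: `θ = √d/2` if `d ≡ 0 (mod 4)` and `θ = (−1+√d)/2` if
`d ≡ 1 (mod 4)`, where `√d = i√(−d)` has positive imaginary part. -/
noncomputable def thetaOf (d : ℤ) : ℂ :=
  if d % 4 = 0 then Complex.I * Real.sqrt (-d) / 2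
  else (-1 + Complex.I * Real.sqrt (-d)) / 2


/-!
For `r₁ = 0` the Siegel function factors as
`|g_{(0,x)}(τ)| = e^{-π Im τ / 6} · 2|sin πx| · |∏ₙ (1 - qⁿζ)(1 - qⁿζ⁻¹)|` with `|ζ| = 1`, and
each factor of the product is within `3|q|ⁿ` of `1`, so for `Im τ ≥ 1` the product lies in
`[1 - S, e^S]` with `S = 3|q|/(1 - |q|) ≤ 1/21`. Since `a = 1` forces `b ∈ {0, 1}`, we have
`θ_Q = θ`, and the claim compares `sin(π/N)` with `|sin(πt/N)|`. As `t ≢ 0, ±1 (mod N)`, the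
residue of `t` lies in `[2, N - 2]`, so by concavity of `sin` on `[0, π]`
`|sin(πt/N)| ≥ sin(2π/N) = 2 sin(π/N) cos(π/N) ≥ √2 sin(π/N)`, and `e^S < √2 (1 - S)` absorbs
the two products.
-/

open Real

section ProductBounds

variable {ι 𝕜 : Type*} [NormedField 𝕜] {f : ι → 𝕜} {δ : ι → ℝ}

theorem Finset.one_sub_sum_le_prod_one_sub (s : Finset ι) (h0 : ∀ i ∈ s, 0 ≤ δ i)
    (h1 : ∀ i ∈ s, δ i ≤ 1) : 1 - ∑ i ∈ s, δ i ≤ ∏ i ∈ s, (1 - δ i) := by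
  classical
  induction s using Finset.induction with
  | empty => simp
  | insert i s hi ih =>
    simp only [Finset.mem_insert, forall_eq_or_imp] at h0 h1
    rw [Finset.prod_insert hi, Finset.sum_insert hi]
    have hsum : 0 ≤ ∑ j ∈ s, δ j := Finset.sum_nonneg h0.2
    have hprod : ∏ j ∈ s, (1 - δ j) ≤ 1 :=
      Finset.prod_le_one (fun j hj ↦ sub_nonneg.2 (h1.2 j hj)) fun j hj ↦ by linarith [h0.2 j hj]
    nlinarith [ih h0.2 h1.2]

theorem norm_prod_le_exp_sum (s : Finset ι) (hf : ∀ i, ‖f i - 1‖ ≤ δ i) :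
    ‖∏ i ∈ s, f i‖ ≤ rexp (∑ i ∈ s, δ i) := by
  rw [norm_prod, Real.exp_sum]
  refine Finset.prod_le_prod (fun i _ ↦ norm_nonneg _) fun i _ ↦ ?_
  calc ‖f i‖ ≤ ‖f i - 1‖ + ‖(1 : 𝕜)‖ := norm_le_norm_sub_add _ _
    _ ≤ δ i + 1 := by rw [norm_one]; linarith [hf i]
    _ ≤ rexp (δ i) := add_one_le_exp _

theorem one_sub_sum_le_norm_prod (s : Finset ι) (h0 : ∀ i, 0 ≤ δ i)
    (hf : ∀ i, ‖f i - 1‖ ≤ δ i) : 1 - ∑ i ∈ s, δ i ≤ ‖∏ i ∈ s, f i‖ := by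
  by_cases h1 : ∀ i ∈ s, δ i ≤ 1
  · refine (s.one_sub_sum_le_prod_one_sub (fun i _ ↦ h0 i) h1).trans ?_
    rw [norm_prod]
    refine Finset.prod_le_prod (fun i hi ↦ sub_nonneg.2 (h1 i hi)) fun i _ ↦ ?_
    have := norm_sub_norm_le (1 : 𝕜) (1 - f i)
    rw [sub_sub_cancel, norm_one, norm_sub_rev] at this
    linarith [hf i]
  · obtain ⟨i, hi, hδi⟩ := not_forall₂.1 h1
    have := Finset.single_le_sum (fun j _ ↦ h0 j) hi
    linarith [norm_nonneg (∏ i ∈ s, f i)]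

theorem norm_tprod_mem_Icc (hδ : Summable δ) (h0 : ∀ i, 0 ≤ δ i)
    (hf : ∀ i, ‖f i - 1‖ ≤ δ i) :
    ‖∏' i, f i‖ ∈ Set.Icc (1 - ∑' i, δ i) (rexp (∑' i, δ i)) := by
  have hsum (s : Finset ι) : ∑ i ∈ s, δ i ≤ ∑' i, δ i := hδ.sum_le_tsum s fun i _ ↦ h0 i
  by_cases hm : Multipliable f
  · have hlim := (continuous_norm.tendsto _).comp hm.hasProd
    exact ⟨ge_of_tendsto' hlim fun s ↦
        (sub_le_sub_left (hsum s) 1).trans (one_sub_sum_le_norm_prod s h0 hf),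
      le_of_tendsto' hlim fun s ↦
        (norm_prod_le_exp_sum s hf).trans (exp_le_exp.2 (hsum s))⟩
  · have : 0 ≤ ∑' i, δ i := tsum_nonneg h0
    rw [tprod_eq_one_of_not_multipliable hm, norm_one]
    exact ⟨by linarith, one_le_exp this⟩

end ProductBounds

theorem norm_one_sub_mul_mul_one_sub_mul_inv_sub_one_le {𝕜 : Type*} [NormedField 𝕜]
    {w ζ : 𝕜} (hζ : ‖ζ‖ = 1) (hw : ‖w‖ ≤ 1) :
    ‖(1 - w * ζ) * (1 - w * ζ⁻¹) - 1‖ ≤ 3 * ‖w‖ := by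
  have hζ0 : ζ ≠ 0 := norm_ne_zero_iff.1 (by rw [hζ]; exact one_ne_zero)
  have hexpand : (1 - w * ζ) * (1 - w * ζ⁻¹) - 1 = w * w - w * ζ - w * ζ⁻¹ := by
    field_simp; ring
  rw [hexpand]
  calc ‖w * w - w * ζ - w * ζ⁻¹‖ ≤ ‖w * w‖ + ‖w * ζ‖ + ‖w * ζ⁻¹‖ :=
        (norm_sub_le _ _).trans (add_le_add_left (norm_sub_le _ _) _)
    _ = ‖w‖ * ‖w‖ + 2 * ‖w‖ := by simp only [norm_mul, norm_inv, hζ]; ring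
    _ ≤ 3 * ‖w‖ := by nlinarith [norm_nonneg w]

theorem norm_cexp_two_pi_I_mul (τ : ℂ) :
    ‖Complex.exp (2 * π * Complex.I * τ)‖ = rexp (-(2 * π * τ.im)) := by
  rw [Complex.norm_exp]; simp

theorem norm_siegelTerm_zero_sub_one_le (x : ℚ) {τ : ℂ} (hτ : 0 ≤ τ.im) (n : ℕ) :
    ‖siegelTerm 0 x τ n - 1‖ ≤ 3 * rexp (-(2 * π * τ.im)) ^ (n + 1) := by
  have hq : ‖Complex.exp (2 * π * Complex.I * τ)‖ ≤ 1 := by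
    rw [norm_cexp_two_pi_I_mul, exp_le_one_iff]
    nlinarith [pi_pos]
  have hζ : ‖Complex.exp (2 * π * Complex.I * (((0 : ℚ) : ℂ) * τ + (x : ℂ)))‖ = 1 := by
    rw [Complex.norm_exp]; simp
  have hqn : ‖Complex.exp (2 * π * Complex.I * τ) ^ (n + 1)‖ ≤ 1 := by
    rw [norm_pow]; exact pow_le_one₀ (norm_nonneg _) hq
  have := norm_one_sub_mul_mul_one_sub_mul_inv_sub_one_le hζ hqn
  rwa [norm_pow, norm_cexp_two_pi_I_mul] at this

/-- `∑ₙ 3|q|ⁿ⁺¹` for `q = e^{2πiτ}`: the total of the bounds on `‖siegelTerm 0 x τ n - 1‖`. -/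
noncomputable def siegelProdError (τ : ℂ) : ℝ :=
  3 * rexp (-(2 * π * τ.im)) / (1 - rexp (-(2 * π * τ.im)))

theorem hasSum_three_mul_pow_succ {ε : ℝ} (h0 : 0 ≤ ε) (h1 : ε < 1) :
    HasSum (fun n : ℕ ↦ 3 * ε ^ (n + 1)) (3 * ε / (1 - ε)) := by
  have hpow : (fun n : ℕ ↦ 3 * ε ^ (n + 1)) = fun n ↦ 3 * ε * ε ^ n := by
    funext n; ring
  rw [hpow, div_eq_mul_inv]
  exact (hasSum_geometric_of_lt_one h0 h1).mul_left (3 * ε)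

theorem norm_tprod_siegelTerm_zero_mem_Icc (x : ℚ) {τ : ℂ} (hτ : 0 < τ.im) :
    ‖∏' n, siegelTerm 0 x τ n‖ ∈
      Set.Icc (1 - siegelProdError τ) (rexp (siegelProdError τ)) := by
  have hε1 : rexp (-(2 * π * τ.im)) < 1 := exp_lt_one_iff.2 (by nlinarith [pi_pos])
  have hsum := hasSum_three_mul_pow_succ (exp_nonneg _) hε1
  rw [siegelProdError, ← hsum.tsum_eq]
  exact norm_tprod_mem_Icc hsum.summable (fun n ↦ by positivity)
    (norm_siegelTerm_zero_sub_one_le x hτ.le)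

theorem norm_siegel_zero (x : ℚ) (τ : ℂ) :
    ‖siegel 0 x τ‖ =
      rexp (-(π / 6 * τ.im)) * (2 * |sin (π * x)|) * ‖∏' n, siegelTerm 0 x τ n‖ := by
  have h₁ : ‖Complex.exp (π * Complex.I * (((0 : ℚ) : ℂ) ^ 2 - ((0 : ℚ) : ℂ) + 1 / 6) * τ)‖ =
      rexp (-(π / 6 * τ.im)) := by
    rw [Complex.norm_exp]; simp [div_eq_mul_inv]
  have h₂ : ‖Complex.exp (π * Complex.I * (x : ℂ) * (((0 : ℚ) : ℂ) - 1))‖ = 1 := by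
    rw [Complex.norm_exp]; simp
  have h₃ : ‖1 - Complex.exp (2 * π * Complex.I * (((0 : ℚ) : ℂ) * τ + (x : ℂ)))‖ =
      2 * |sin (π * x)| := by
    have harg : 2 * π * Complex.I * (((0 : ℚ) : ℂ) * τ + (x : ℂ)) =
        Complex.I * ((2 * (π * x) : ℝ) : ℂ) := by
      push_cast; ring
    rw [harg, norm_sub_rev, Complex.norm_exp_I_mul_ofReal_sub_one, norm_mul, Real.norm_two,
      Real.norm_eq_abs, mul_div_cancel_left₀ _ two_ne_zero]
  rw [siegel, norm_mul, norm_mul, norm_mul, norm_neg, h₁, h₂, h₃, mul_one]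

theorem abs_sin_pi_mul_intCast_div_eq_emod (t : ℤ) {N : ℕ} (hN : N ≠ 0) :
    |sin (π * t / N)| = |sin (π * (t % N : ℤ) / N)| := by
  have hdecomp : π * t / N = π * (t % N : ℤ) / N + (t / N : ℤ) * π := by
    have ht : (t : ℝ) = (t % N : ℤ) + N * (t / N : ℤ) := by
      exact_mod_cast (Int.emod_add_mul_ediv t N).symm
    rw [ht]
    field_simp
  rw [hdecomp, sin_add_int_mul_pi, abs_mul, abs_neg_one_zpow, one_mul]

theorem sin_two_mul_pi_div_le_sin {N m : ℝ} (h2 : 2 ≤ m) (hm : m ≤ N - 2) :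
    sin (2 * π / N) ≤ sin (π * m / N) := by
  have hN : 0 < N := by linarith
  have hx : 2 * π / N ∈ Set.Icc 0 π := by
    refine ⟨by positivity, ?_⟩
    rw [div_le_iff₀ hN]; nlinarith [pi_pos]
  have hz : π * m / N ∈ Set.Icc (2 * π / N) (π - 2 * π / N) := by
    constructor
    · rw [div_le_div_iff_of_pos_right hN]; nlinarith [pi_pos]
    · rw [div_le_iff₀ hN, sub_mul, div_mul_cancel₀ _ hN.ne']; nlinarith [pi_pos]
  have hy : π - 2 * π / N ∈ Set.Icc 0 π := ⟨by linarith [hx.2], by linarith [hx.1]⟩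
  have := strictConcaveOn_sin_Icc.concaveOn.min_le_of_mem_Icc hx hy hz
  rwa [sin_pi_sub, min_self] at this

theorem sqrt_two_mul_sin_pi_div_le_abs_sin {N : ℕ} (hN : N ≠ 0) {t : ℤ}
    (ht : ¬(N : ℤ) ∣ t ∧ ¬(N : ℤ) ∣ (t - 1) ∧ ¬(N : ℤ) ∣ (t + 1)) :
    √2 * sin (π / N) ≤ |sin (π * t / N)| := by
  obtain ⟨ht₀, ht₁, ht₂⟩ := ht
  set m := t % N with hm
  have ht_eq : t = m + N * (t / N) := (Int.emod_add_mul_ediv t N).symm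
  have hm0 : 0 ≤ m := Int.emod_nonneg t (by exact_mod_cast hN)
  have hmN : m < N := Int.emod_lt_of_pos t (by omega)
  have hm₀ : m ≠ 0 := fun h ↦ ht₀ (Int.dvd_of_emod_eq_zero h)
  have hm₁ : m ≠ 1 := fun h ↦ ht₁ ⟨t / N, by omega⟩
  have hm₂ : m ≠ N - 1 := fun h ↦ ht₂ ⟨t / N + 1, by rw [mul_add]; omega⟩
  have hm2 : (2 : ℝ) ≤ m := by exact_mod_cast (show (2 : ℤ) ≤ m by omega)
  have hmN2 : (m : ℝ) ≤ N - 2 := by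
    have : m ≤ (N : ℤ) - 2 := by omega
    exact_mod_cast this
  have hN4 : (4 : ℝ) ≤ N := by linarith
  have hcos : √2 / 2 ≤ cos (π / N) := by
    rw [← cos_pi_div_four]
    apply cos_le_cos_of_nonneg_of_le_pi (by positivity) (by linarith [pi_pos])
    gcongr
  have hsin : 0 ≤ sin (π / N) :=
    sin_nonneg_of_nonneg_of_le_pi (by positivity) (div_le_self pi_pos.le (by linarith))
  have hsin_m : 0 ≤ sin (π * m / N) := by
    apply sin_nonneg_of_nonneg_of_le_pi (by positivity)
    rw [div_le_iff₀ (by linarith)]; nlinarith [pi_pos]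
  rw [abs_sin_pi_mul_intCast_div_eq_emod t hN, ← hm, abs_of_nonneg hsin_m]
  calc √2 * sin (π / N) ≤ 2 * sin (π / N) * cos (π / N) := by nlinarith
    _ = sin (2 * π / N) := by rw [← sin_two_mul, mul_div_assoc]
    _ ≤ sin (π * m / N) := sin_two_mul_pi_div_le_sin hm2 hmN2

theorem siegelProdError_le_of_one_le_im {τ : ℂ} (hτ : 1 ≤ τ.im) : siegelProdError τ ≤ 1 / 21 := by
  have hε : rexp (-(2 * π * τ.im)) ≤ 1 / 64 :=
    calc rexp (-(2 * π * τ.im)) ≤ rexp (-1) ^ 6 := by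
          rw [← exp_nat_mul, exp_le_exp]; push_cast; nlinarith [pi_gt_three]
      _ ≤ (1 / 2) ^ 6 := by gcongr; exact exp_neg_one_lt_half.le
      _ = 1 / 64 := by norm_num
  rw [siegelProdError, div_le_iff₀ (by linarith)]
  linarith

theorem exp_lt_sqrt_two_mul_one_sub {S : ℝ} (hS : S ≤ 1 / 21) : rexp S < √2 * (1 - S) := by
  have hsqrt : (7 / 5 : ℝ) < √2 := by rw [lt_sqrt (by norm_num)]; norm_num
  have hexp : (1 - S) * rexp S ≤ 1 := by
    calc (1 - S) * rexp S ≤ rexp (-S) * rexp S := by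
          gcongr; linarith [add_one_le_exp (-S)]
      _ = 1 := by rw [← exp_add, neg_add_cancel, exp_zero]
  nlinarith [exp_pos S]

theorem norm_siegel_zero_one_div_lt {τ : ℂ} (hτ : 1 ≤ τ.im) {N : ℕ} (hN : 2 ≤ N) {t : ℤ}
    (ht : ¬(N : ℤ) ∣ t ∧ ¬(N : ℤ) ∣ (t - 1) ∧ ¬(N : ℤ) ∣ (t + 1)) :
    ‖siegel 0 (1 / N) τ‖ < ‖siegel 0 (t / N) τ‖ := by
  have hS := siegelProdError_le_of_one_le_im hτ
  obtain ⟨-, hP₁⟩ := norm_tprod_siegelTerm_zero_mem_Icc (1 / N) (by linarith)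
  obtain ⟨hPt, -⟩ := norm_tprod_siegelTerm_zero_mem_Icc (t / N) (by linarith)
  have hsin := sqrt_two_mul_sin_pi_div_le_abs_sin (by omega) ht
  have hsin₁ : 0 < sin (π / N) := by
    have : (2 : ℝ) ≤ N := by exact_mod_cast hN
    exact sin_pos_of_pos_of_lt_pi (by positivity) (div_lt_self pi_pos (by linarith))
  rw [norm_siegel_zero, norm_siegel_zero]
  push_cast
  rw [mul_one_div, abs_of_pos hsin₁, ← mul_div_assoc]
  calc rexp (-(π / 6 * τ.im)) * (2 * sin (π / N)) * ‖∏' n, siegelTerm 0 (1 / N) τ n‖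
      ≤ rexp (-(π / 6 * τ.im)) * (2 * sin (π / N)) * rexp (siegelProdError τ) := by gcongr
    _ < rexp (-(π / 6 * τ.im)) * (2 * sin (π / N)) * (√2 * (1 - siegelProdError τ)) := by
      gcongr; exact exp_lt_sqrt_two_mul_one_sub hS
    _ = rexp (-(π / 6 * τ.im)) * (2 * (√2 * sin (π / N))) * (1 - siegelProdError τ) := by ring
    _ ≤ rexp (-(π / 6 * τ.im)) * (2 * |sin (π * t / N)|) *
          ‖∏' n, siegelTerm 0 (t / N) τ n‖ := by
      gcongr; linarith

theorem thetaOf_eq_of_sq_sub_four_mul_eq {b c d : ℤ} (hb : b = 0 ∨ b = 1)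
    (hdisc : b ^ 2 - 4 * c = d) :
    thetaOf d = (-(b : ℂ) + Complex.I * √(-d)) / 2 := by
  rcases hb with rfl | rfl
  · rw [thetaOf, if_pos (by omega)]; push_cast; ring
  · rw [thetaOf, if_neg (by omega)]; push_cast; ring

theorem siegel_ineq_of_reduced_form_a_eq_one_s_eq_zero_general (d : ℤ) (hd : d ≤ -7)
    (a b c : ℤ) (ha : a = 1)
    (hdisc : b ^ 2 - 4 * a * c = d)
    (hred : (-a < b ∧ b ≤ a ∧ a < c) ∨ (0 ≤ b ∧ b ≤ a ∧ a = c))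
    (N : ℕ) (hN : 2 ≤ N) (t : ℤ)
    (ht : ¬(N : ℤ) ∣ t ∧ ¬(N : ℤ) ∣ (t - 1) ∧ ¬(N : ℤ) ∣ (t + 1)) :
    ‖(siegel 0 ((t : ℚ) / N)
          ((-(b : ℂ) + Complex.I * Real.sqrt (-d)) / 2))⁻¹ /
        (siegel 0 (1 / N) (thetaOf d))⁻¹‖ < 1 ∧
      ‖siegel 0 (1 / N) (thetaOf d)‖ <
        ‖siegel 0 ((t : ℚ) / N)
          ((-(b : ℂ) + Complex.I * Real.sqrt (-d)) / 2)‖ := by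
  subst ha
  have hb : b = 0 ∨ b = 1 := by omega
  rw [thetaOf_eq_of_sq_sub_four_mul_eq hb (by linarith)]
  have him : 1 ≤ ((-(b : ℂ) + Complex.I * √(-d)) / 2).im := by
    have hd4 : (4 : ℝ) ≤ -d := by exact_mod_cast (by omega : (4 : ℤ) ≤ -d)
    have hsqrt : (2 : ℝ) ≤ √(-d) := by rw [le_sqrt zero_le_two (by linarith)]; linarith
    have him_eq : ((-(b : ℂ) + Complex.I * √(-d)) / 2).im = √(-d) / 2 := by simp
    linarith
  have key := norm_siegel_zero_one_div_lt him hN ht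
  refine ⟨?_, key⟩
  rw [norm_div, norm_inv, norm_inv, inv_div_inv, div_lt_one ((norm_nonneg _).trans_lt key)]
  exact key

/-- Let `d_K ≤ −7` be the discriminant of an imaginary quadratic field,
`θ` as above, and `Q = X² + bXY + cY²` a reduced (primitive positive definite) form of
discriminant `d_K` with leading coefficient `a = 1`, `θ_Q = (−b+√d_K)/2`.  Then for every
`N ≥ 2` and every integer `t` with `t ≢ 0, 1, −1 (mod N)` one has
`|g_{(0,t/N)}(θ_Q)⁻¹ / g_{(0,1/N)}(θ)⁻¹| < 1`, i.e.
`|g_{(0,1/N)}(θ)| < |g_{(0,t/N)}(θ_Q)|`. -/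
theorem siegel_ineq_of_reduced_form_a_eq_one_s_eq_zero (d : ℤ) (hd : d ≤ -7)
    (hfund : IsImagQuadDisc d)
    (a b c : ℤ) (ha : a = 1) (hprim : Int.gcd (Int.gcd a b) c = 1)
    (hdisc : b ^ 2 - 4 * a * c = d)
    (hred : (-a < b ∧ b ≤ a ∧ a < c) ∨ (0 ≤ b ∧ b ≤ a ∧ a = c))
    (N : ℕ) (hN : 2 ≤ N) (t : ℤ)
    (ht : ¬(N : ℤ) ∣ t ∧ ¬(N : ℤ) ∣ (t - 1) ∧ ¬(N : ℤ) ∣ (t + 1)) :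
    ‖(siegel 0 ((t : ℚ) / N)
          ((-(b : ℂ) + Complex.I * Real.sqrt (-d)) / 2))⁻¹ /
        (siegel 0 (1 / N) (thetaOf d))⁻¹‖ < 1 ∧
      ‖siegel 0 (1 / N) (thetaOf d)‖ <
        ‖siegel 0 ((t : ℚ) / N)
          ((-(b : ℂ) + Complex.I * Real.sqrt (-d)) / 2)‖ :=
  siegel_ineq_of_reduced_form_a_eq_one_s_eq_zero_general d hd a b c ha hdisc hred N hN t ht
end
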